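/- Let λ ≤ μ be positive integers. Every symmetric ASHG that admits a (λ,μ)-partition also admits an NS* (λ,μ)-partition. -/
import Mathlib


open Finset

variable {α : Type*} [Fintype α] [DecidableEq α]

/-- `π` encodes a partition of the agent set: `π i` is the coalition containing `i`. -/
def IsPartition (π : α → Finset α) : Prop :=
  (∀ i, i ∈ π i) ∧ ∀ i j, j ∈ π i → π j = π i

/-- A `(lam,mu)`-partition: a partition all of whose coalitions have size between
`lam` and `mu`. -/
def IsSizedPartition (lam mu : ℕ) (π : α → Finset α) : Prop :=
  IsPartition π ∧ ∀ i, lam ≤ (π i).card ∧ (π i).card ≤ mu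

/-- Additively separable utility of agent `i` in coalition `C`. -/
noncomputable def utility (v : α → α → ℝ) (i : α) (C : Finset α) : ℝ :=
  ∑ j ∈ C.erase i, v i j

/-- Social welfare of a partition. -/
noncomputable def SW (v : α → α → ℝ) (π : α → Finset α) : ℝ :=
  ∑ i, utility v i (π i)

/-- `π'` results from partition `π` by a single-agent deviation of agent `i`. -/
def IsDeviation (π π' : α → Finset α) (i : α) : Prop :=
  IsPartition π ∧ IsPartition π' ∧ π' i ≠ π i ∧
    ∀ j, j ≠ i → (π j).erase i = (π' j).erase i

/-- A Nash deviation: a single-agent deviation strictly improving the deviator. -/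
def IsNashDev (v : α → α → ℝ) (π π' : α → Finset α) (i : α) : Prop :=
  IsDeviation π π' i ∧ utility v i (π i) < utility v i (π' i)

/-- No member of `i`'s abandoned coalition is worse off. -/
def ContractOK (v : α → α → ℝ) (π π' : α → Finset α) (i : α) : Prop :=
  ∀ j ∈ (π i).erase i, utility v j (π j) ≤ utility v j (π' j)

/-- No member of `i`'s newly joined coalition is worse off. -/
def IndivOK (v : α → α → ℝ) (π π' : α → Finset α) (i : α) : Prop :=
  ∀ j ∈ (π' i).erase i, utility v j (π j) ≤ utility v j (π' j)

/-- A `(lam,mu)`-permissible deviation: the deviator ends up in a coalition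
within the size bounds. -/
def Permissible (lam mu : ℕ) (π' : α → Finset α) (i : α) : Prop :=
  lam ≤ (π' i).card ∧ (π' i).card ≤ mu

def IsNS (lam mu : ℕ) (v : α → α → ℝ) (π : α → Finset α) : Prop :=
  IsSizedPartition lam mu π ∧
    ¬ ∃ i π', IsNashDev v π π' i ∧ Permissible lam mu π' i

def IsNSstar (lam mu : ℕ) (v : α → α → ℝ) (π : α → Finset α) : Prop :=
  IsSizedPartition lam mu π ∧
    ¬ ∃ i π', IsNashDev v π π' i ∧ IsSizedPartition lam mu π'

def IsIS (lam mu : ℕ) (v : α → α → ℝ) (π : α → Finset α) : Prop :=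
  IsSizedPartition lam mu π ∧
    ¬ ∃ i π', (IsNashDev v π π' i ∧ IndivOK v π π' i) ∧ Permissible lam mu π' i

def IsISstar (lam mu : ℕ) (v : α → α → ℝ) (π : α → Finset α) : Prop :=
  IsSizedPartition lam mu π ∧
    ¬ ∃ i π', (IsNashDev v π π' i ∧ IndivOK v π π' i) ∧ IsSizedPartition lam mu π'

def IsCNS (lam mu : ℕ) (v : α → α → ℝ) (π : α → Finset α) : Prop :=
  IsSizedPartition lam mu π ∧
    ¬ ∃ i π', (IsNashDev v π π' i ∧ ContractOK v π π' i) ∧ Permissible lam mu π' i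

def IsCNSstar (lam mu : ℕ) (v : α → α → ℝ) (π : α → Finset α) : Prop :=
  IsSizedPartition lam mu π ∧
    ¬ ∃ i π', (IsNashDev v π π' i ∧ ContractOK v π π' i) ∧ IsSizedPartition lam mu π'

def IsCIS (lam mu : ℕ) (v : α → α → ℝ) (π : α → Finset α) : Prop :=
  IsSizedPartition lam mu π ∧
    ¬ ∃ i π', (IsNashDev v π π' i ∧ ContractOK v π π' i ∧ IndivOK v π π' i) ∧
      Permissible lam mu π' i

def IsCISstar (lam mu : ℕ) (v : α → α → ℝ) (π : α → Finset α) : Prop :=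
  IsSizedPartition lam mu π ∧
    ¬ ∃ i π', (IsNashDev v π π' i ∧ ContractOK v π π' i ∧ IndivOK v π π' i) ∧
      IsSizedPartition lam mu π'

lemma part_mem_comm {π : α → Finset α} (h : IsPartition π) {i j : α} (hj : j ∈ π i) :
    i ∈ π j := by
  rw [h.2 i j hj]; exact h.1 i

lemma sum_split_aux (s : Finset α) (f : α → ℝ) (i : α) :
    ∑ x ∈ s, f x = (if i ∈ s then f i else 0) + ∑ x ∈ s.erase i, f x := by
  by_cases h : i ∈ s
  · rw [if_pos h, Finset.add_sum_erase s f h]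
  · rw [if_neg h, Finset.erase_eq_of_notMem h, zero_add]

lemma util_expand (v : α → α → ℝ) {π π' : α → Finset α} {i : α}
    (hd : ∀ j, j ≠ i → (π j).erase i = (π' j).erase i) {j : α} (hij : j ≠ i) :
    utility v j (π' j) =
      (if i ∈ π' j then v j i else 0) + ∑ x ∈ ((π j).erase i).erase j, v j x := by
  unfold utility
  rw [sum_split_aux ((π' j).erase j) (v j) i]
  congr 1
  · simp [Finset.mem_erase, Ne.symm hij]
  · rw [Finset.erase_right_comm, ← hd j hij]

lemma util_expand' (v : α → α → ℝ) {π : α → Finset α} {i j : α} (hij : j ≠ i) :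
    utility v j (π j) =
      (if i ∈ π j then v j i else 0) + ∑ x ∈ ((π j).erase i).erase j, v j x := by
  unfold utility
  rw [sum_split_aux ((π j).erase j) (v j) i]
  congr 1
  · simp [Finset.mem_erase, Ne.symm hij]
  · rw [Finset.erase_right_comm]

lemma side_sum (v : α → α → ℝ) (hsym : ∀ i j, i ≠ j → v i j = v j i)
    {π : α → Finset α} (hp : IsPartition π) (i : α) :
    ∑ j ∈ univ.erase i, (if i ∈ π j then v j i else 0) = utility v i (π i) := by
  have h1 : ∀ j ∈ univ.erase i, (if i ∈ π j then v j i else 0)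
      = (if j ∈ (π i).erase i then v i j else 0) := by
    intro j hj
    have hji : j ≠ i := (Finset.mem_erase.mp hj).1
    have hiff : i ∈ π j ↔ j ∈ (π i).erase i := by
      constructor
      · intro h; exact Finset.mem_erase.mpr ⟨hji, part_mem_comm hp h⟩
      · intro h; exact part_mem_comm hp (Finset.mem_erase.mp h).2
    by_cases h : i ∈ π j
    · rw [if_pos h, if_pos (hiff.mp h), hsym j i hji]
    · rw [if_neg h, if_neg (fun hc => h (hiff.mpr hc))]
  rw [Finset.sum_congr rfl h1]
  rw [Finset.sum_ite_mem]
  have : (univ.erase i) ∩ ((π i).erase i) = (π i).erase i :=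
    Finset.inter_eq_right.mpr (fun x hx =>
      Finset.mem_erase.mpr ⟨(Finset.mem_erase.mp hx).1, Finset.mem_univ x⟩)
  rw [this]; rfl

lemma SW_dev (v : α → α → ℝ) (hsym : ∀ i j, i ≠ j → v i j = v j i)
    {π π' : α → Finset α} {i : α} (hdev : IsDeviation π π' i) :
    SW v π' - SW v π = 2 * (utility v i (π' i) - utility v i (π i)) := by
  obtain ⟨hp, hp', _, hd⟩ := hdev
  unfold SW
  rw [← Finset.sum_sub_distrib,
    sum_split_aux univ (fun j => utility v j (π' j) - utility v j (π j)) i,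
    if_pos (Finset.mem_univ i)]
  have h1 : ∀ j ∈ univ.erase i, utility v j (π' j) - utility v j (π j)
      = (if i ∈ π' j then v j i else 0) - (if i ∈ π j then v j i else 0) := by
    intro j hj
    have hji : j ≠ i := (Finset.mem_erase.mp hj).1
    rw [util_expand v hd hji, util_expand' v hji]
    ring
  rw [Finset.sum_congr rfl h1, Finset.sum_sub_distrib,
    side_sum v hsym hp' i, side_sum v hsym hp i]
  ring

/-- every symmetric ASHG admitting a `(lam,mu)`-partition admits an
NS* `(lam,mu)`-partition. -/
theorem statement5 {α : Type*} [Fintype α] [DecidableEq α] (lam mu : ℕ)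
    (hlam : 0 < lam) (hlm : lam ≤ mu) (v : α → α → ℝ)
    (hsym : ∀ i j, i ≠ j → v i j = v j i)
    (hex : ∃ π : α → Finset α, IsSizedPartition lam mu π) :
    ∃ π : α → Finset α, IsNSstar lam mu v π := by
  classical
  obtain ⟨π0, hπ0⟩ := hex
  set s : Finset (α → Finset α) :=
    Finset.univ.filter (fun π => IsSizedPartition lam mu π) with hs
  have hne : s.Nonempty := ⟨π0, by simp [hs, hπ0]⟩
  obtain ⟨π, hπs, hmax⟩ := Finset.exists_max_image s (SW v) hne
  have hπ : IsSizedPartition lam mu π := by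
    simpa [hs] using hπs
  refine ⟨π, hπ, ?_⟩
  rintro ⟨i, π', ⟨hdev, hlt⟩, hsz'⟩
  have h := SW_dev v hsym hdev
  have hle := hmax π' (by simp [hs, hsz'])
  linarith
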